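/- arXiv:quant-ph/0602001 — 3 statements merged into one kernel-verified Lean document; each statement's English description precedes it below -/
import Mathlib

section
/- Let d be odd and let M be a subgroup of (ZMod d)^{2n} on which the symplectic form vanishes identically (M isotropic) with |M| = d^n. Then the operator P = d^{-n} Σ_{m∈M} χ([v,m]) w(m) is a projection (P² = P, P† = P) of rank one, for any v ∈ (ZMod d)^{2n}. -/
open scoped BigOperators
open Finset Matrix
open scoped ComplexOrder

attribute [instance] Classical.propDecidable

/-- The character `χ(t) = exp(2πit/d)` on `ZMod d`. -/
noncomputable def chi (d : ℕ) (t : ZMod d) : ℂ :=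
  Complex.exp (2 * Real.pi * Complex.I * (t.val : ℂ) / (d : ℂ))

/-- The standard symplectic form on `(Fin n → R) × (Fin n → R)`. -/
def symp (R : Type) [CommRing R] (n : ℕ) (v w : (Fin n → R) × (Fin n → R)) : R :=
  (∑ i, v.1 i * w.2 i) - ∑ i, v.2 i * w.1 i

/-- Single-particle Weyl operator `w(p,q) = χ(-2⁻¹pq) ẑ(p) x̂(q)` on `ℂ^d`. -/
noncomputable def weyl1 (d : ℕ) (p q : ZMod d) : Matrix (ZMod d) (ZMod d) ℂ :=
  Matrix.of fun x y => chi d (-(2⁻¹ : ZMod d) * p * q + p * x) * (if y = x - q then 1 else 0)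

/-- Multi-particle Weyl operator on `(ℂ^d)^{⊗n}` in coordinates. -/
noncomputable def weyl (d n : ℕ) (p q : Fin n → ZMod d) :
    Matrix (Fin n → ZMod d) (Fin n → ZMod d) ℂ :=
  Matrix.of fun x y =>
    chi d (-(2⁻¹ : ZMod d) * (∑ i, p i * q i) + ∑ i, p i * x i) * (if y = x - q then 1 else 0)

/-- Weyl operator indexed by a phase space point. -/
noncomputable def weylV (d n : ℕ) (v : (Fin n → ZMod d) × (Fin n → ZMod d)) :
    Matrix (Fin n → ZMod d) (Fin n → ZMod d) ℂ :=
  weyl d n v.1 v.2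

/-- Action of the Weyl operator on wave functions:
`(w(p,q)ψ)(y) = χ(-2⁻¹pq + py) ψ(y-q)`. -/
noncomputable def weylAct (d n : ℕ) (p q : Fin n → ZMod d) (ψ : (Fin n → ZMod d) → ℂ) :
    (Fin n → ZMod d) → ℂ :=
  fun y => chi d (-(2⁻¹ : ZMod d) * (∑ i, p i * q i) + ∑ i, p i * y i) * ψ (y - q)

/-- Wigner function of a pure state `ψ`. -/
noncomputable def wignerPure (d n : ℕ) [NeZero d] (ψ : (Fin n → ZMod d) → ℂ)
    (p q : Fin n → ZMod d) : ℂ :=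
  ((d : ℂ) ^ n)⁻¹ * ∑ ξ : Fin n → ZMod d, chi d (-(∑ i, ξ i * p i)) *
    (starRingEnd ℂ) (ψ (q - (2⁻¹ : ZMod d) • ξ)) * ψ (q + (2⁻¹ : ZMod d) • ξ)


/-!
On an isotropic `M` the cocycle `χ(2⁻¹[a,b])` of the Weyl product `w(a) w(b)` is trivial (odd `d`
makes `2` invertible), and `χ([v,·])` is a character, so `m ↦ χ([v,m]) w(m)` is a unitary
representation of `M`; `P` is its group average, hence a Hermitian idempotent. Every `w(m)` with
`m ≠ 0` is traceless (a nontrivial character sum), so `tr P = d^n / |M| = 1`, and the rank of an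
idempotent equals its trace.
-/

theorem Matrix.IsIdempotentElem.rank_eq_trace {m K : Type*} [Fintype m] [DecidableEq m] [Field K]
    {A : Matrix m m K} (hA : IsIdempotentElem A) : (A.rank : K) = A.trace := by
  have hproj := LinearMap.IsIdempotentElem.isProj_range _ (hA.map Matrix.toLinAlgEquiv')
  rw [← Matrix.trace_toLin'_eq]
  exact hproj.trace.symm

section GroupAverage

variable {G K m : Type*} [AddGroup G] [Fintype G] [Field K]

theorem isIdempotentElem_inv_card_smul_sum [Fintype m] [CharZero K] (ρ : G → Matrix m m K)
    (hρ : ∀ a b, ρ (a + b) = ρ a * ρ b) :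
    IsIdempotentElem ((Fintype.card G : K)⁻¹ • ∑ g, ρ g) := by
  have hrow (a : G) : ρ a * ∑ g, ρ g = ∑ g, ρ g := by
    simp only [Finset.mul_sum, ← hρ]
    exact Fintype.sum_equiv (Equiv.addLeft a) _ _ fun _ => rfl
  have hcard : (Fintype.card G : K) ≠ 0 := Nat.cast_ne_zero.mpr Fintype.card_ne_zero
  rw [IsIdempotentElem, Matrix.smul_mul, Matrix.mul_smul, Finset.sum_mul]
  simp only [hrow, Finset.sum_const, Finset.card_univ, ← Nat.cast_smul_eq_nsmul K, smul_smul,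
    inv_mul_cancel₀ hcard, mul_one]

theorem conjTranspose_inv_card_smul_sum [StarRing K] (ρ : G → Matrix m m K)
    (hρ : ∀ a, (ρ a)ᴴ = ρ (-a)) :
    ((Fintype.card G : K)⁻¹ • ∑ g, ρ g)ᴴ = (Fintype.card G : K)⁻¹ • ∑ g, ρ g := by
  rw [Matrix.conjTranspose_smul, Matrix.conjTranspose_sum, star_inv₀, star_natCast]
  simp only [hρ]
  congr 1
  exact Fintype.sum_equiv (Equiv.neg G) _ _ fun _ => rfl

end GroupAverage

theorem chi_eq_stdAddChar (d : ℕ) [NeZero d] : chi d = ZMod.stdAddChar := by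
  funext t
  rw [ZMod.stdAddChar_apply, ZMod.toCircle_apply, chi]

theorem chi_add (d : ℕ) [NeZero d] (a b : ZMod d) : chi d (a + b) = chi d a * chi d b := by
  simp only [chi_eq_stdAddChar, AddChar.map_add_eq_mul]

theorem chi_zero (d : ℕ) [NeZero d] : chi d 0 = 1 := by
  simp only [chi_eq_stdAddChar, AddChar.map_zero_eq_one]

theorem chi_neg (d : ℕ) [NeZero d] (t : ZMod d) : chi d (-t) = star (chi d t) := by
  simp only [chi_eq_stdAddChar, AddChar.map_neg_eq_conj]; rfl

theorem chi_sum (d : ℕ) [NeZero d] {ι : Type*} (s : Finset ι) (f : ι → ZMod d) :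
    chi d (∑ i ∈ s, f i) = ∏ i ∈ s, chi d (f i) := by
  induction s using Finset.cons_induction with
  | empty => simp only [Finset.sum_empty, Finset.prod_empty, chi_zero]
  | cons a s ha ih => rw [Finset.sum_cons, Finset.prod_cons, chi_add, ih]

theorem sum_chi_dotProduct (d n : ℕ) [NeZero d] (p : Fin n → ZMod d) :
    ∑ x : Fin n → ZMod d, chi d (∑ i, p i * x i) = if p = 0 then (d : ℂ) ^ n else 0 := by
  have hprod : ∑ x : Fin n → ZMod d, chi d (∑ i, p i * x i) =
      ∏ i, ∑ t : ZMod d, chi d (t * p i) := by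
    simp only [chi_sum, Finset.prod_univ_sum, Fintype.piFinset_univ, mul_comm]
  rw [hprod]
  simp only [chi_eq_stdAddChar, AddChar.sum_mulShift _ (ZMod.isPrimitive_stdAddChar d), ZMod.card]
  split_ifs with hp
  · simp [hp]
  · obtain ⟨i, hi⟩ := Function.ne_iff.mp hp
    exact Finset.prod_eq_zero (Finset.mem_univ i)
      (by rw [if_neg (show p i ≠ 0 from hi), Nat.cast_zero])

theorem symp_add_right (R : Type) [CommRing R] (n : ℕ) (v a b : (Fin n → R) × (Fin n → R)) :
    symp R n v (a + b) = symp R n v a + symp R n v b := by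
  simp only [symp, Prod.fst_add, Prod.snd_add, Pi.add_apply, mul_add, Finset.sum_add_distrib]
  ring

theorem symp_neg_right (R : Type) [CommRing R] (n : ℕ) (v a : (Fin n → R) × (Fin n → R)) :
    symp R n v (-a) = -symp R n v a := by
  simp only [symp, Prod.fst_neg, Prod.snd_neg, Pi.neg_apply, mul_neg, Finset.sum_neg_distrib]
  ring

theorem symp_zero_right (R : Type) [CommRing R] (n : ℕ) (v : (Fin n → R) × (Fin n → R)) :
    symp R n v 0 = 0 := by
  simp [symp]

theorem ZMod.inv_two_mul_two {d : ℕ} (hd : Odd d) : (2⁻¹ : ZMod d) * 2 = 1 :=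
  ZMod.inv_mul_of_unit _ ((ZMod.isUnit_iff_coprime 2 d).mpr (Nat.coprime_two_left.mpr hd))

theorem weylV_mul (d n : ℕ) [NeZero d] (hd : Odd d)
    (a b : (Fin n → ZMod d) × (Fin n → ZMod d)) :
    weylV d n a * weylV d n b =
      chi d ((2⁻¹ : ZMod d) * symp (ZMod d) n a b) • weylV d n (a + b) := by
  obtain ⟨p, q⟩ := a
  obtain ⟨p', q'⟩ := b
  ext x z
  rw [Matrix.mul_apply, Finset.sum_eq_single_of_mem (x - q) (Finset.mem_univ _)]
  · simp only [weylV, weyl, symp, of_apply, Matrix.smul_apply, smul_eq_mul, Prod.fst_add,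
      Prod.snd_add, if_true, mul_one, sub_sub]
    split_ifs
    · rw [mul_one, mul_one, ← chi_add, ← chi_add]
      congr 1
      have hqp : ∑ i, q i * p' i = ∑ i, p' i * q i :=
        Finset.sum_congr rfl fun i _ => mul_comm _ _
      simp only [Pi.add_apply, Pi.sub_apply, mul_add, add_mul, mul_sub,
        Finset.sum_add_distrib, Finset.sum_sub_distrib, hqp]
      linear_combination (∑ i, p' i * q i) * ZMod.inv_two_mul_two hd
    · simp
  · intro y _ hy
    simp only [weylV, weyl, of_apply, if_neg hy, mul_zero, zero_mul]

theorem weylV_conjTranspose (d n : ℕ) [NeZero d] (hd : Odd d)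
    (a : (Fin n → ZMod d) × (Fin n → ZMod d)) :
    (weylV d n a)ᴴ = weylV d n (-a) := by
  obtain ⟨p, q⟩ := a
  ext x y
  simp only [weylV, weyl, conjTranspose_apply, of_apply, Prod.fst_neg, Prod.snd_neg,
    star_mul', apply_ite (star : ℂ → ℂ), star_one, star_zero, sub_neg_eq_add, ← chi_neg]
  by_cases h : x = y - q
  · obtain rfl : y = x + q := by rw [h, sub_add_cancel]
    rw [if_pos h, if_pos rfl]
    congr 2
    simp only [Pi.add_apply, Pi.neg_apply, mul_add, neg_mul, mul_neg, neg_neg,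
      Finset.sum_add_distrib, Finset.sum_neg_distrib]
    linear_combination (∑ i, p i * q i) * ZMod.inv_two_mul_two hd
  · rw [if_neg h, if_neg (fun hy => h (by rw [hy, add_sub_cancel_right])), mul_zero, mul_zero]

theorem trace_weylV (d n : ℕ) [NeZero d] (a : (Fin n → ZMod d) × (Fin n → ZMod d)) :
    (weylV d n a).trace = if a = 0 then (d : ℂ) ^ n else 0 := by
  obtain ⟨p, q⟩ := a
  by_cases hq : q = 0
  · subst hq
    simp only [Matrix.trace, weylV, weyl, diag_apply, of_apply, sub_zero, if_true, mul_one,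
      Pi.zero_apply, mul_zero, zero_add, Finset.sum_const_zero, sum_chi_dotProduct,
      Prod.mk_eq_zero, and_true]
  · rw [if_neg (by simp [hq])]
    refine Finset.sum_eq_zero fun x _ => ?_
    simp only [weylV, weyl, diag_apply, of_apply]
    rw [if_neg (fun hx => hq (sub_eq_self.mp hx.symm)), mul_zero]

noncomputable def twistedWeyl (d n : ℕ) (v m : (Fin n → ZMod d) × (Fin n → ZMod d)) :
    Matrix (Fin n → ZMod d) (Fin n → ZMod d) ℂ :=
  chi d (symp (ZMod d) n v m) • weylV d n m

section TwistedWeyl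

variable {d n : ℕ} [NeZero d] (v : (Fin n → ZMod d) × (Fin n → ZMod d))

theorem twistedWeyl_add (hd : Odd d) {a b : (Fin n → ZMod d) × (Fin n → ZMod d)}
    (hab : symp (ZMod d) n a b = 0) :
    twistedWeyl d n v (a + b) = twistedWeyl d n v a * twistedWeyl d n v b := by
  rw [twistedWeyl, twistedWeyl, twistedWeyl, Matrix.smul_mul, Matrix.mul_smul, weylV_mul d n hd,
    hab, mul_zero, chi_zero, one_smul, smul_smul, symp_add_right, chi_add]

theorem twistedWeyl_conjTranspose (hd : Odd d) (a : (Fin n → ZMod d) × (Fin n → ZMod d)) :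
    (twistedWeyl d n v a)ᴴ = twistedWeyl d n v (-a) := by
  rw [twistedWeyl, twistedWeyl, Matrix.conjTranspose_smul, weylV_conjTranspose d n hd,
    symp_neg_right, chi_neg]

theorem trace_twistedWeyl (a : (Fin n → ZMod d) × (Fin n → ZMod d)) :
    (twistedWeyl d n v a).trace = if a = 0 then (d : ℂ) ^ n else 0 := by
  rw [twistedWeyl, Matrix.trace_smul, trace_weylV, smul_eq_mul]
  split_ifs with ha
  · rw [ha, symp_zero_right, chi_zero, one_mul]
  · rw [mul_zero]

end TwistedWeyl

/-- For a maximally isotropic subgroup `M` of `(ZMod d)^{2n}` and any phase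
space point `v`, the operator `P = d^{-n} Σ_{m∈M} χ([v,m]) w(m)` is a rank-one
orthogonal projection. -/
theorem stab_projector (d n : ℕ) [NeZero d] (hd : Odd d)
    (M : AddSubgroup ((Fin n → ZMod d) × (Fin n → ZMod d)))
    (hiso : ∀ m₁ ∈ M, ∀ m₂ ∈ M, symp (ZMod d) n m₁ m₂ = 0)
    (hcard : Nat.card M = d ^ n)
    (v : (Fin n → ZMod d) × (Fin n → ZMod d)) :
    ∀ P : Matrix (Fin n → ZMod d) (Fin n → ZMod d) ℂ,
      P = ((d : ℂ) ^ n)⁻¹ • ∑ m : M, chi d (symp (ZMod d) n v m) • weylV d n (m : _) →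
      P * P = P ∧ Pᴴ = P ∧ P.rank = 1 := by
  rintro P rfl
  have hnorm : ((d : ℂ) ^ n)⁻¹ = (Fintype.card M : ℂ)⁻¹ := by
    rw [← Nat.card_eq_fintype_card, hcard, Nat.cast_pow]
  let ρ : M → Matrix (Fin n → ZMod d) (Fin n → ZMod d) ℂ := fun m => twistedWeyl d n v m
  have hidem : IsIdempotentElem ((Fintype.card M : ℂ)⁻¹ • ∑ m, ρ m) :=
    isIdempotentElem_inv_card_smul_sum ρ fun a b => twistedWeyl_add v hd (hiso _ a.2 _ b.2)
  have htrace : (((d : ℂ) ^ n)⁻¹ • ∑ m, ρ m).trace = 1 := by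
    have hne : ((d : ℂ) ^ n) ≠ 0 := pow_ne_zero _ (Nat.cast_ne_zero.mpr (NeZero.ne d))
    simp only [Matrix.trace_smul, Matrix.trace_sum, ρ, trace_twistedWeyl,
      ZeroMemClass.coe_eq_zero, Finset.sum_ite_eq', Finset.mem_univ, if_true, smul_eq_mul,
      inv_mul_cancel₀ hne]
  refine ⟨?_, ?_, ?_⟩
  · rw [hnorm]
    exact hidem.eq
  · rw [hnorm]
    exact conjTranspose_inv_card_smul_sum ρ fun a => twistedWeyl_conjTranspose v hd a
  · rw [hnorm] at htrace ⊢
    exact_mod_cast hidem.rank_eq_trace.trans htrace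
end

section
/- Let d be odd. A nonempty subset S of (ZMod d)^n that contains 2⁻¹(a+b) for every a, b ∈ S (a balanced set) is a coset of a subgroup closed under scalar multiplication; i.e., S is an affine subspace of the ZMod d-module (ZMod d)^n. -/
open scoped BigOperators
open Finset Matrix
open scoped ComplexOrder

/-!
Translating a point of `S` to the origin, we may assume `0 ∈ S`. Halving with `0` shows that `S`
is stable under `x ↦ 2⁻¹ • x`, hence under every power of `2⁻¹`. Since `d` is odd, `2` is a unit of
the finite ring `ZMod d`, so `2` itself is a power of `2⁻¹`: thus `a + b = 2 • (2⁻¹ • (a + b)) ∈ S`.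
An additively closed set containing `0` is stable under all `ZMod d`-scalars, because these are
natural numbers.
-/

namespace ZMod

variable {d : ℕ}

lemma isUnit_two_of_odd (hd : Odd d) : IsUnit (2 : ZMod d) := by
  simpa using (isUnit_iff_coprime 2 d).mpr (Nat.coprime_two_left.mpr hd)

lemma inv_two_mul_two_of_odd (hd : Odd d) : (2⁻¹ : ZMod d) * 2 = 1 :=
  inv_mul_of_unit _ (isUnit_two_of_odd hd)

lemma exists_inv_two_pow_eq_two_of_odd (hd : Odd d) : ∃ k : ℕ, (2⁻¹ : ZMod d) ^ k = 2 := by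
  have : NeZero d := ⟨hd.pos.ne'⟩
  have hunit : IsUnit (2⁻¹ : ZMod d) := .of_mul_eq_one _ (inv_two_mul_two_of_odd hd)
  have hφ : (2⁻¹ : ZMod d) ^ d.totient = 1 := by
    simpa only [Units.val_pow_eq_pow_val, IsUnit.unit_spec, Units.val_one] using
      congrArg Units.val (pow_totient hunit.unit)
  refine ⟨d.totient - 1, ?_⟩
  calc (2⁻¹ : ZMod d) ^ (d.totient - 1)
      = (2⁻¹ : ZMod d) ^ (d.totient - 1) * 2⁻¹ * 2 := by
        rw [mul_assoc, inv_two_mul_two_of_odd hd, mul_one]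
    _ = 2 := by rw [← pow_succ, Nat.sub_add_cancel (Nat.totient_pos.mpr hd.pos), hφ, one_mul]

end ZMod

def MidpointClosed (d : ℕ) {M : Type*} [AddCommGroup M] [Module (ZMod d) M] (S : Set M) : Prop :=
  ∀ a ∈ S, ∀ b ∈ S, (2⁻¹ : ZMod d) • (a + b) ∈ S

namespace MidpointClosed

variable {d : ℕ} {M : Type*} [AddCommGroup M] [Module (ZMod d) M] {S : Set M}

lemma preimage_add_right (hd : Odd d) (hS : MidpointClosed d S) (v : M) :
    MidpointClosed d ((· + v) ⁻¹' S) := by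
  intro a ha b hb
  have hv : (2⁻¹ : ZMod d) • (2 : ZMod d) • v = v := by
    rw [smul_smul, ZMod.inv_two_mul_two_of_odd hd, one_smul]
  have key : (2⁻¹ : ZMod d) • ((a + v) + (b + v)) = (2⁻¹ : ZMod d) • (a + b) + v := by
    rw [add_add_add_comm, ← two_smul (ZMod d) v, smul_add, hv]
  simpa only [Set.mem_preimage, key] using hS _ ha _ hb

lemma inv_two_pow_smul_mem (hS : MidpointClosed d S) (h0 : 0 ∈ S) {a : M} (ha : a ∈ S)
    (k : ℕ) : (2⁻¹ : ZMod d) ^ k • a ∈ S := by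
  induction k with
  | zero => simpa using ha
  | succ k ih => simpa [pow_succ', mul_smul] using hS _ ih 0 h0

lemma add_mem (hd : Odd d) (hS : MidpointClosed d S) (h0 : 0 ∈ S) {a b : M} (ha : a ∈ S)
    (hb : b ∈ S) : a + b ∈ S := by
  obtain ⟨k, hk⟩ := ZMod.exists_inv_two_pow_eq_two_of_odd hd
  have h := hS.inv_two_pow_smul_mem h0 (hS a ha b hb) k
  rwa [hk, smul_smul, mul_comm, ZMod.inv_two_mul_two_of_odd hd, one_smul] at h

def toSubmodule (hd : Odd d) (hS : MidpointClosed d S) (h0 : 0 ∈ S) :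
    Submodule (ZMod d) M where
  carrier := S
  add_mem' := hS.add_mem hd h0
  zero_mem' := h0
  smul_mem' r x hx := by
    have : NeZero d := ⟨hd.pos.ne'⟩
    rw [← ZMod.natCast_zmod_val r, Nat.cast_smul_eq_nsmul]
    exact AddSubmonoid.nsmul_mem ⟨⟨S, hS.add_mem hd h0⟩, h0⟩ hx r.val

end MidpointClosed

/-- For odd d, a nonempty balanced subset of `(ZMod d)^n` (closed under
midpoints) is an affine subspace. -/
theorem balanced_is_affine (d n : ℕ) (hd : Odd d) (S : Set (Fin n → ZMod d))
    (hne : S.Nonempty)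
    (hbal : ∀ a ∈ S, ∀ b ∈ S, (2⁻¹ : ZMod d) • (a + b) ∈ S) :
    ∃ (M : Submodule (ZMod d) (Fin n → ZMod d)) (v : Fin n → ZMod d),
      S = {x | x - v ∈ M} := by
  obtain ⟨v, hv⟩ := hne
  have hT : MidpointClosed d ((· + v) ⁻¹' S) := MidpointClosed.preimage_add_right hd hbal v
  have h0 : (0 : Fin n → ZMod d) ∈ (· + v) ⁻¹' S := by simpa using hv
  refine ⟨hT.toSubmodule hd h0, v, ?_⟩
  ext x
  change x ∈ S ↔ x - v + v ∈ S
  rw [sub_add_cancel]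
end

section
/- Let q = d be a prime power and V a 2n-dimensional symplectic vector space over the field F_d with nondegenerate symplectic form. The number of m-dimensional totally isotropic subspaces of V equals [n choose m]_d · ∏_{i=0}^{m-1} (d^{n-i} + 1), where [n choose m]_d = ∏_{i=0}^{m-1} (d^{n-i}-1)/(d^{m-i}-1) is the Gaussian binomial coefficient. -/
open scoped BigOperators
open Finset Matrix
open scoped ComplexOrder

/-!
Count isotropic frames, i.e. linearly independent `m`-tuples with pairwise vanishing form, in two
ways. A frame `s` of length `k` extends by exactly the vectors of `s^⊥ \ span s`, and `s^⊥` has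
dimension `2n - k` by nondegeneracy, so there are `∏_{i<m} (q^(2n-i) - q^i)` frames. Sending a
frame to its span, each `m`-dimensional totally isotropic subspace is hit by its
`∏_{i<m} (q^m - q^i)` ordered bases. Dividing, the `i`-th factor is
`(q^(n-i) - 1)(q^(n-i) + 1) / (q^(m-i) - 1)`.
-/

open Module Submodule

namespace LinearMap.BilinForm

variable {K V : Type*} [Field K] [AddCommGroup V] [Module K V] (B : LinearMap.BilinForm K V)

def isotropicFrames (k : ℕ) : Set (Fin k → V) :=
  {f | LinearIndependent K f ∧ ∀ i j, B (f i) (f j) = 0}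

def totallyIsotropicSubspaces (m : ℕ) : Set (Submodule K V) :=
  {W | finrank K W = m ∧ ∀ v ∈ W, ∀ w ∈ W, B v w = 0}

variable {B}

lemma mem_orthogonal_span_iff {s : Set V} {v : V} :
    v ∈ B.orthogonal (span K s) ↔ ∀ x ∈ s, B x v = 0 := by
  refine ⟨fun h x hx => h x (subset_span hx), fun h x hx => ?_⟩
  induction hx using Submodule.span_induction with
  | mem y hy => exact h y hy
  | zero => simp
  | add y z _ _ hy hz => simp [hy, hz]
  | smul c y _ hy => simp [hy]

lemma span_le_orthogonal_span_of_mem_isotropicFrames {k : ℕ} {f : Fin k → V}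
    (hf : f ∈ B.isotropicFrames k) :
    span K (Set.range f) ≤ B.orthogonal (span K (Set.range f)) := by
  rw [span_le]
  rintro _ ⟨i, rfl⟩
  exact mem_orthogonal_span_iff.2 (by rintro _ ⟨j, rfl⟩; exact hf.2 j i)

lemma span_mem_totallyIsotropicSubspaces {k : ℕ} {f : Fin k → V}
    (hf : f ∈ B.isotropicFrames k) :
    span K (Set.range f) ∈ B.totallyIsotropicSubspaces k :=
  ⟨by rw [finrank_span_eq_card hf.1, Fintype.card_fin],
    fun _ hv _ hw => span_le_orthogonal_span_of_mem_isotropicFrames hf hw _ hv⟩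

def isotropicFramesSpan (m : ℕ) :
    B.isotropicFrames m → B.totallyIsotropicSubspaces m :=
  fun f => ⟨_, span_mem_totallyIsotropicSubspaces f.2⟩

noncomputable def isotropicFramesSpanFiberEquiv [FiniteDimensional K V] {m : ℕ}
    (W : B.totallyIsotropicSubspaces m) :
    {f // isotropicFramesSpan m f = W} ≃ {g : Fin m → W.1 // LinearIndependent K g} where
  toFun f := ⟨fun i => ⟨f.1.1 i, congrArg Subtype.val f.2 ▸ subset_span ⟨i, rfl⟩⟩,
    .of_comp W.1.subtype f.1.2.1⟩
  invFun g := by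
    refine ⟨⟨W.1.subtype ∘ g.1, g.2.map' _ (ker_subtype _),
      fun i j => W.2.2 _ (g.1 i).2 _ (g.1 j).2⟩, Subtype.ext ?_⟩
    have hg : span K (Set.range g.1) = ⊤ :=
      eq_top_of_finrank_eq (by rw [finrank_span_eq_card g.2, Fintype.card_fin, W.2.1])
    change span K (Set.range (W.1.subtype ∘ g.1)) = W.1
    rw [Set.range_comp, ← map_span, hg, Submodule.map_top, range_subtype]
  left_inv f := rfl
  right_inv g := rfl

variable [Fintype K] [Finite V]

local notation "q" => Fintype.card K

theorem card_isotropicFrames_eq_card_mul (m : ℕ) :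
    Nat.card (B.isotropicFrames m) =
      Nat.card (B.totallyIsotropicSubspaces m) * ∏ i : Fin m, (q ^ m - q ^ (i : ℕ)) := by
  have := Fintype.ofFinite (B.totallyIsotropicSubspaces m)
  have hfiber (W : B.totallyIsotropicSubspaces m) :
      Nat.card {f // isotropicFramesSpan m f = W} = ∏ i : Fin m, (q ^ m - q ^ (i : ℕ)) := by
    rw [Nat.card_congr (isotropicFramesSpanFiberEquiv W), card_linearIndependent W.2.1.ge, W.2.1]
  rw [← Nat.card_congr (Equiv.sigmaFiberEquiv (isotropicFramesSpan m)), Nat.card_sigma]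
  simp only [hfiber, Finset.sum_const, Finset.card_univ, smul_eq_mul, Nat.card_eq_fintype_card]

lemma card_orthogonal_sdiff (hNd : B.Nondegenerate) {W : Submodule K V}
    (hW : W ≤ B.orthogonal W) :
    Nat.card ↥((B.orthogonal W : Set V) \ W) =
      q ^ (finrank K V - finrank K W) - q ^ finrank K W := by
  rw [Nat.card_coe_set_eq, Set.ncard_sdiff hW, ← Nat.card_coe_set_eq, ← Nat.card_coe_set_eq]
  change Nat.card (B.orthogonal W) - Nat.card W = _
  rw [natCard_eq_pow_finrank (K := K) (V := B.orthogonal W),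
    natCard_eq_pow_finrank (K := K) (V := W),
    finrank_orthogonal hNd, Nat.card_eq_fintype_card]

noncomputable def isotropicFramesSuccEquiv (hAlt : B.IsAlt) (k : ℕ) :
    B.isotropicFrames (k + 1) ≃
      Σ s : B.isotropicFrames k,
        ↥((B.orthogonal (span K (Set.range s.1)) : Set V) \ span K (Set.range s.1)) where
  toFun f := ⟨⟨Fin.tail f.1, (linearIndependent_finSucc.mp f.2.1).1,
      fun i j => f.2.2 i.succ j.succ⟩,
    ⟨f.1 0, mem_orthogonal_span_iff.2 (by rintro _ ⟨j, rfl⟩; exact f.2.2 j.succ 0),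
      (linearIndependent_finSucc.mp f.2.1).2⟩⟩
  invFun := fun ⟨s, v⟩ => ⟨Fin.cons v.1 s.1,
    linearIndependent_finCons.mpr ⟨s.2.1, v.2.2⟩, by
      have hv (j) : B (s.1 j) v.1 = 0 := v.2.1 _ (subset_span ⟨j, rfl⟩)
      intro i j
      cases i using Fin.cases <;> cases j using Fin.cases
      · exact hAlt v.1
      · exact hAlt.isRefl _ _ (hv _)
      · exact hv _
      · exact s.2.2 _ _⟩
  left_inv f := Subtype.ext (Fin.cons_self_tail f.1)
  right_inv := fun ⟨s, v⟩ => rfl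

theorem card_isotropicFrames (hAlt : B.IsAlt) (hNd : B.Nondegenerate) (k : ℕ) :
    Nat.card (B.isotropicFrames k) = ∏ i ∈ Finset.range k, (q ^ (finrank K V - i) - q ^ i) := by
  induction k with
  | zero => simp [isotropicFrames]
  | succ k ih =>
    have := Fintype.ofFinite (B.isotropicFrames k)
    have hfiber (s : B.isotropicFrames k) :
        Nat.card ↥((B.orthogonal (span K (Set.range s.1)) : Set V) \ span K (Set.range s.1)) =
          q ^ (finrank K V - k) - q ^ k := by
      rw [card_orthogonal_sdiff hNd (span_le_orthogonal_span_of_mem_isotropicFrames s.2),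
        finrank_span_eq_card s.2.1, Fintype.card_fin]
    rw [Nat.card_congr (isotropicFramesSuccEquiv hAlt k), Nat.card_sigma]
    simp only [hfiber, Finset.sum_const, Finset.card_univ, smul_eq_mul,
      ← Nat.card_eq_fintype_card, ih, Finset.prod_range_succ]

theorem card_totallyIsotropicSubspaces_mul (hAlt : B.IsAlt) (hNd : B.Nondegenerate) (m : ℕ) :
    Nat.card (B.totallyIsotropicSubspaces m) * ∏ i ∈ Finset.range m, (q ^ m - q ^ i) =
      ∏ i ∈ Finset.range m, (q ^ (finrank K V - i) - q ^ i) := by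
  rw [← card_isotropicFrames hAlt hNd, card_isotropicFrames_eq_card_mul,
    Fin.prod_univ_eq_prod_range (fun i => q ^ m - q ^ i)]

end LinearMap.BilinForm

section Symplectic

variable (R : Type) [CommRing R] (n : ℕ)

def symplecticForm : LinearMap.BilinForm R ((Fin n → R) × (Fin n → R)) :=
  LinearMap.mk₂ R (symp R n)
    (fun v v' w => by simp only [symp, Prod.fst_add, Prod.snd_add, Pi.add_apply, add_mul,
      Finset.sum_add_distrib]; ring)
    (fun c v w => by simp only [symp, Prod.smul_fst, Prod.smul_snd, Pi.smul_apply, smul_eq_mul,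
      mul_sub, Finset.mul_sum, mul_assoc])
    (fun v w w' => by simp only [symp, Prod.fst_add, Prod.snd_add, Pi.add_apply, mul_add,
      Finset.sum_add_distrib]; ring)
    (fun c v w => by simp only [symp, Prod.smul_fst, Prod.smul_snd, Pi.smul_apply, smul_eq_mul,
      mul_sub, Finset.mul_sum, mul_left_comm])

lemma symplecticForm_isAlt : (symplecticForm R n).IsAlt := by
  intro v
  simp [symplecticForm, symp, mul_comm]

lemma symplecticForm_nondegenerate : (symplecticForm R n).Nondegenerate := by
  refine (symplecticForm_isAlt R n).isRefl.nondegenerate_iff_separatingLeft.mpr fun v hv => ?_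
  ext j
  · simpa [symplecticForm, symp, Pi.single_apply] using hv (0, Pi.single j 1)
  · simpa [symplecticForm, symp, Pi.single_apply] using hv (Pi.single j 1, 0)

end Symplectic

lemma cast_pow_sub_div_cast_pow_sub {q : ℕ} (hq : 1 < q) {n m i : ℕ} (hi : i < m) :
    ((q ^ (2 * n - i) - q ^ i : ℕ) : ℚ) / ((q ^ m - q ^ i : ℕ) : ℚ) =
      ((q : ℚ) ^ (n - i) - 1) / ((q : ℚ) ^ (m - i) - 1) * ((q : ℚ) ^ (n - i) + 1) := by
  rcases le_or_gt i n with hin | hni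
  · have hnum : ((q ^ (2 * n - i) - q ^ i : ℕ) : ℚ) =
        q ^ i * ((q ^ (n - i) - 1) * (q ^ (n - i) + 1)) := by
      rw [Nat.cast_sub (Nat.pow_le_pow_right hq.le (by omega)),
        show 2 * n - i = i + (n - i) + (n - i) by omega]
      push_cast
      ring
    have hden : ((q ^ m - q ^ i : ℕ) : ℚ) = q ^ i * (q ^ (m - i) - 1) := by
      rw [Nat.cast_sub (Nat.pow_le_pow_right hq.le hi.le)]
      push_cast
      rw [← pow_mul_pow_sub (q : ℚ) hi.le]
      ring
    rw [hnum, hden, mul_div_mul_left _ _ (by positivity)]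
    ring
  -- For `n < i` both sides vanish: the left by truncated subtraction, the right as `q ^ 0 - 1`.
  · rw [Nat.sub_eq_zero_of_le (Nat.pow_le_pow_right hq.le (by omega)),
      Nat.sub_eq_zero_of_le hni.le]
    simp

theorem count_isotropic_subspaces_general (F : Type) [Field F] [Fintype F] (d n m : ℕ)
    (hd : Fintype.card F = d) :
    (Nat.card {M : Submodule F ((Fin n → F) × (Fin n → F)) //
        Module.finrank F M = m ∧ ∀ v ∈ M, ∀ w ∈ M, symp F n v w = 0} : ℚ) =
      (∏ i ∈ Finset.range m, (((d : ℚ) ^ (n - i) - 1) / ((d : ℚ) ^ (m - i) - 1))) *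
        ∏ i ∈ Finset.range m, ((d : ℚ) ^ (n - i) + 1) := by
  subst hd
  change (Nat.card ((symplecticForm F n).totallyIsotropicSubspaces m) : ℚ) = _
  have hq : 1 < Fintype.card F := Fintype.one_lt_card
  have hdim : finrank F ((Fin n → F) × (Fin n → F)) = 2 * n := by
    rw [finrank_prod, finrank_fin_fun]; ring
  have hcount := (symplecticForm F n).card_totallyIsotropicSubspaces_mul
    (symplecticForm_isAlt F n) (symplecticForm_nondegenerate F n) m
  rw [hdim] at hcount
  have hbases : ∏ i ∈ Finset.range m, (Fintype.card F ^ m - Fintype.card F ^ i) ≠ 0 :=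
    Finset.prod_ne_zero_iff.2 fun i hi =>
      Nat.sub_ne_zero_of_lt (Nat.pow_lt_pow_right hq (Finset.mem_range.1 hi))
  rw [← Finset.prod_mul_distrib,
    ← Finset.prod_congr rfl fun i hi => cast_pow_sub_div_cast_pow_sub hq (Finset.mem_range.1 hi),
    Finset.prod_div_distrib, ← Nat.cast_prod, ← Nat.cast_prod, ← hcount, Nat.cast_mul,
    mul_div_cancel_right₀ _ (Nat.cast_ne_zero.2 hbases)]

/-- The number of m-dimensional totally isotropic subspaces of the standard
2n-dimensional symplectic space over a finite field of order d equals the Gaussian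
binomial `[n m]_d` times `∏_{i=0}^{m-1}(d^{n-i}+1)`. -/
theorem count_isotropic_subspaces (F : Type) [Field F] [Fintype F] (d n m : ℕ)
    (hd : Fintype.card F = d) (hm : m ≤ n) :
    (Nat.card {M : Submodule F ((Fin n → F) × (Fin n → F)) //
        Module.finrank F M = m ∧ ∀ v ∈ M, ∀ w ∈ M, symp F n v w = 0} : ℚ) =
      (∏ i ∈ Finset.range m, (((d : ℚ) ^ (n - i) - 1) / ((d : ℚ) ^ (m - i) - 1))) *
        ∏ i ∈ Finset.range m, ((d : ℚ) ^ (n - i) + 1) :=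
  count_isotropic_subspaces_general F d n m hd
end
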